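/- Let N ∈ ℕ ∪ {0}, λ > 0 and ξ ∈ ℂ. Identify ℝ² with ℂ and define U : ℂ → ℝ by U(y) = log( λ / (1 + λ·|y^{N+1} − ξ|²)² ). Then ΔU(y) + 8(N+1)² |y|^{2N} e^{U(y)} = 0 for every y ∈ ℂ. -/

import Mathlib

/-!
For an entire `f` and `Q = 1 + λ|f|²`, the function `u = log (λ / Q²)` satisfies the Liouville
equation `Δu = -8λ|f'|² / Q² = -8|f'|² eᵘ`; the bubble is the case `f y = y^{N+1} - ξ`, where
`|f'(y)|² = (N+1)²|y|^{2N}`. Along a line `s ↦ y + s v` the second derivative of `u` involves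
`v f'` and `v² f''`: the `f''` terms cancel between the directions `v = 1` and `v = I`, and the
squared first-order terms add up to `4λ²|f|²|f'|²`.
-/

/-- The Laplacian `Δ = ∂²/∂y₁² + ∂²/∂y₂²` on `ℝ² ≅ ℂ`. -/
noncomputable def lapC (u : ℂ → ℝ) (y : ℂ) : ℝ :=
  deriv (deriv fun s : ℝ => u (y + (s : ℂ))) 0 +
  deriv (deriv fun s : ℝ => u (y + (s : ℂ) * Complex.I)) 0

open Complex
open scoped InnerProductSpace

lemma deriv_deriv_log_div_sq {Q Q' : ℝ → ℝ} {Q'' lam x : ℝ} (hlam : lam ≠ 0)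
    (hQ : ∀ s, HasDerivAt Q (Q' s) s) (hQ' : HasDerivAt Q' Q'' x) (hQ0 : ∀ s, Q s ≠ 0) :
    deriv (deriv fun s => Real.log (lam / Q s ^ 2)) x
      = -2 * ((Q'' * Q x - Q' x ^ 2) / Q x ^ 2) := by
  have hlog :
      (fun s => Real.log (lam / Q s ^ 2)) = fun s => Real.log lam - 2 * Real.log (Q s) := by
    funext s
    rw [Real.log_div hlam (pow_ne_zero 2 (hQ0 s)), Real.log_pow]
    push_cast
    ring
  have hderiv :
      deriv (fun s => Real.log lam - 2 * Real.log (Q s)) = fun s => -2 * (Q' s / Q s) := by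
    funext s
    refine ((((hQ s).log (hQ0 s)).const_mul 2).const_sub _).deriv.trans ?_
    ring
  rw [hlog, hderiv]
  refine ((hQ'.div (hQ x) (hQ0 x)).const_mul (-2)).deriv.trans ?_
  ring

lemma hasDerivAt_comp_line {f : ℂ → ℂ} (hf : Differentiable ℂ f) (y v : ℂ) (t : ℝ) :
    HasDerivAt (fun s : ℝ => f (y + s * v)) (deriv f (y + t * v) * v) t := by
  have hline : HasDerivAt (fun s : ℝ => y + s * v) v t := by
    simpa using (ofRealCLM.hasDerivAt.mul_const v).const_add y
  exact (hf _).hasDerivAt.comp t hline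

lemma inner_sq_add_inner_mul_I_sq (a b : ℂ) :
    ⟪a, b⟫_ℝ ^ 2 + ⟪a, b * I⟫_ℝ ^ 2 = ‖a‖ ^ 2 * ‖b‖ ^ 2 := by
  simp only [Complex.inner, ← normSq_eq_norm_sq, normSq_apply, mul_re, mul_im, conj_re, conj_im,
    I_re, I_im]
  ring

section Liouville

variable {f : ℂ → ℂ} {lam : ℝ}

lemma deriv_deriv_log_bubble_line (hf : Differentiable ℂ f) (hlam : 0 < lam) (y v : ℂ) :
    deriv (deriv fun s : ℝ => Real.log (lam / (1 + lam * ‖f (y + s * v)‖ ^ 2) ^ 2)) 0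
      = -2 * ((2 * lam * (‖deriv f y * v‖ ^ 2 + ⟪f y, deriv (deriv f) y * v ^ 2⟫_ℝ)
            * (1 + lam * ‖f y‖ ^ 2) - (2 * lam * ⟪f y, deriv f y * v⟫_ℝ) ^ 2)
          / (1 + lam * ‖f y‖ ^ 2) ^ 2) := by
  have hG := hasDerivAt_comp_line hf y v
  have hG' t := (hasDerivAt_comp_line hf.deriv y v t).mul_const v
  have hQ t := ((hG t).norm_sq.const_mul lam).const_add 1
  have hQ' := ((hG 0).inner ℝ (hG' 0)).const_mul (2 * lam)
  have hQ0 (t : ℝ) : 1 + lam * ‖f (y + t * v)‖ ^ 2 ≠ 0 := by positivity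
  rw [deriv_deriv_log_div_sq hlam.ne' (fun t => (hQ t).congr_deriv (by ring)) hQ' hQ0]
  simp only [ofReal_zero, zero_mul, add_zero, real_inner_self_eq_norm_sq, mul_assoc, ← sq]
  ring

theorem lapC_log_bubble_add_eq_zero (hf : Differentiable ℂ f) (hlam : 0 < lam) (y : ℂ) :
    lapC (fun z => Real.log (lam / (1 + lam * ‖f z‖ ^ 2) ^ 2)) y
      + 8 * ‖deriv f y‖ ^ 2 * Real.exp (Real.log (lam / (1 + lam * ‖f y‖ ^ 2) ^ 2)) = 0 := by
  have hx := deriv_deriv_log_bubble_line hf hlam y 1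
  have hy := deriv_deriv_log_bubble_line hf hlam y I
  simp only [mul_one, one_pow] at hx
  rw [lapC, hx, hy, Real.exp_log (by positivity), I_sq, norm_mul, norm_I, mul_neg_one,
    inner_neg_right]
  have hsq := inner_sq_add_inner_mul_I_sq (f y) (deriv f y)
  field_simp
  linear_combination 8 * lam ^ 2 * hsq

end Liouville

theorem stmt12 (N : ℕ) (lam : ℝ) (hlam : 0 < lam) (ξ : ℂ) (U : ℂ → ℝ)
    (hU : ∀ y : ℂ,
      U y = Real.log (lam / (1 + lam * ‖y ^ (N + 1) - ξ‖ ^ 2) ^ 2)) :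
    ∀ y : ℂ,
      lapC U y + 8 * (N + 1 : ℝ) ^ 2 * ‖y‖ ^ (2 * N) * Real.exp (U y)
        = 0 := by
  intro y
  have hf : Differentiable ℂ fun z : ℂ => z ^ (N + 1) - ξ := by fun_prop
  have hderiv :
      ‖deriv (fun z : ℂ => z ^ (N + 1) - ξ) y‖ ^ 2 = (N + 1 : ℝ) ^ 2 * ‖y‖ ^ (2 * N) := by
    rw [deriv_sub_const, deriv_pow_field, Nat.add_sub_cancel, norm_mul, norm_pow, Nat.cast_succ,
      ← ofReal_natCast, ← ofReal_one, ← ofReal_add, norm_real, Real.norm_of_nonneg (by positivity)]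
    ring
  have h := lapC_log_bubble_add_eq_zero hf hlam y
  rw [hderiv, ← mul_assoc] at h
  rwa [funext hU]
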